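/- arXiv:2310.06355 — 3 statements merged into one kernel-verified Lean document; each statement's English description precedes it below -/
import Mathlib

section
/- For every v ∈ ℂ and every τ in the upper half-plane H, the Jacobi theta function θ₃ satisfies the two transformation laws θ₃(v, τ+1) = θ₂(v, τ) and θ₃(v, -1/τ) = (τ/i)^{1/2}·e^{π i τ v²}·θ₃(τ v, τ), where (τ/i)^{1/2} denotes the principal branch of the square root. -/
open Complex Real

/-- `q = e^{2πiτ}`. -/
noncomputable def jq (τ : ℂ) : ℂ := Complex.exp (2 * (π : ℂ) * Complex.I * τ)

/-- `θ(v,τ) = 2 q^{1/8} sin(πv) ∏_{j=1}^∞ (1-q^j)(1-e^{2πiv}q^j)(1-e^{-2πiv}q^j)`. -/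
noncomputable def jTheta (v τ : ℂ) : ℂ :=
  2 * Complex.exp ((π : ℂ) * Complex.I * τ / 4) * Complex.sin ((π : ℂ) * v) *
    ∏' j : ℕ, ((1 - jq τ ^ (j + 1)) *
      (1 - Complex.exp (2 * (π : ℂ) * Complex.I * v) * jq τ ^ (j + 1)) *
      (1 - Complex.exp (-(2 * (π : ℂ) * Complex.I * v)) * jq τ ^ (j + 1)))

/-- `θ₁(v,τ) = 2 q^{1/8} cos(πv) ∏_{j=1}^∞ (1-q^j)(1+e^{2πiv}q^j)(1+e^{-2πiv}q^j)`. -/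
noncomputable def jTheta₁ (v τ : ℂ) : ℂ :=
  2 * Complex.exp ((π : ℂ) * Complex.I * τ / 4) * Complex.cos ((π : ℂ) * v) *
    ∏' j : ℕ, ((1 - jq τ ^ (j + 1)) *
      (1 + Complex.exp (2 * (π : ℂ) * Complex.I * v) * jq τ ^ (j + 1)) *
      (1 + Complex.exp (-(2 * (π : ℂ) * Complex.I * v)) * jq τ ^ (j + 1)))

/-- `θ₂(v,τ) = ∏_{j=1}^∞ (1-q^j)(1-e^{2πiv}q^{j-1/2})(1-e^{-2πiv}q^{j-1/2})`. -/
noncomputable def jTheta₂ (v τ : ℂ) : ℂ :=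
  ∏' j : ℕ, ((1 - jq τ ^ (j + 1)) *
    (1 - Complex.exp (2 * (π : ℂ) * Complex.I * v) *
      Complex.exp (2 * (π : ℂ) * Complex.I * τ * ((j : ℂ) + 1 / 2))) *
    (1 - Complex.exp (-(2 * (π : ℂ) * Complex.I * v)) *
      Complex.exp (2 * (π : ℂ) * Complex.I * τ * ((j : ℂ) + 1 / 2))))

/-- `θ₃(v,τ) = ∏_{j=1}^∞ (1-q^j)(1+e^{2πiv}q^{j-1/2})(1+e^{-2πiv}q^{j-1/2})`. -/
noncomputable def jTheta₃ (v τ : ℂ) : ℂ :=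
  ∏' j : ℕ, ((1 - jq τ ^ (j + 1)) *
    (1 + Complex.exp (2 * (π : ℂ) * Complex.I * v) *
      Complex.exp (2 * (π : ℂ) * Complex.I * τ * ((j : ℂ) + 1 / 2))) *
    (1 + Complex.exp (-(2 * (π : ℂ) * Complex.I * v)) *
      Complex.exp (2 * (π : ℂ) * Complex.I * τ * ((j : ℂ) + 1 / 2))))

/-!
The first law holds factor by factor: `τ ↦ τ + 1` fixes `q` and changes the sign of `q^{j-1/2}`.

For the second, the Jacobi triple product
`∑ₙ a^{n²} xⁿ = ∏_{j ≥ 1} (1 - a^{2j}) (1 + x a^{2j-1}) (1 + x⁻¹ a^{2j-1})`,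
with `a = e^{πiτ}` and `x = e^{2πiv}`, identifies `θ₃(v, τ)` with `jacobiTheta₂ v τ`, whose
behaviour under `τ ↦ -1/τ` is `jacobiTheta₂_functional_equation`. The triple product comes from its
finite version: the `q`-binomial theorem with `q = a²` gives
`∏_{j<N} (1 + x a^{2j+1}) (1 + x⁻¹ a^{2j+1}) = ∑_{|n| ≤ N} [2N, N+n]_q a^{n²} xⁿ`,
and as `N → ∞` the Gaussian binomials `(q;q)_{2N} / ((q;q)_{N+n} (q;q)_{N-n})` stay bounded and
tend to `1 / (q;q)_∞`, so Tannery's theorem passes to the limit.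
-/

open Finset

section GaussianBinomial

variable {R : Type*} [CommRing R]

/-- `(q; q)_k` -/
def qPochhammer (q : R) (k : ℕ) : R := ∏ j ∈ range k, (1 - q ^ (j + 1))

def gaussBinom (q : R) : ℕ → ℕ → R
  | _, 0 => 1
  | 0, _ + 1 => 0
  | m + 1, k + 1 => gaussBinom q m k + q ^ (k + 1) * gaussBinom q m (k + 1)

variable (q : R)

@[simp] lemma qPochhammer_zero : qPochhammer q 0 = 1 := prod_range_zero _

lemma qPochhammer_succ (k : ℕ) : qPochhammer q (k + 1) = qPochhammer q k * (1 - q ^ (k + 1)) :=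
  prod_range_succ _ _

@[simp] lemma gaussBinom_zero_right (m : ℕ) : gaussBinom q m 0 = 1 := by
  cases m <;> rfl

lemma gaussBinom_succ_succ (m k : ℕ) :
    gaussBinom q (m + 1) (k + 1) = gaussBinom q m k + q ^ (k + 1) * gaussBinom q m (k + 1) :=
  rfl

lemma gaussBinom_eq_zero_of_lt {m k : ℕ} (h : m < k) : gaussBinom q m k = 0 := by
  induction m generalizing k with
  | zero => obtain ⟨k, rfl⟩ := Nat.exists_eq_add_one.mpr h; rfl
  | succ m ih =>
    obtain ⟨k, rfl⟩ := Nat.exists_eq_add_one.mpr (Nat.zero_lt_of_lt h)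
    rw [gaussBinom_succ_succ, ih (by omega), ih (by omega), mul_zero, add_zero]

@[simp] lemma gaussBinom_self (m : ℕ) : gaussBinom q m m = 1 := by
  induction m with
  | zero => rfl
  | succ m ih => rw [gaussBinom_succ_succ, ih, gaussBinom_eq_zero_of_lt q m.lt_succ_self, mul_zero,
      add_zero]

lemma gaussBinom_add_mul_qPochhammer (k l : ℕ) :
    gaussBinom q (k + l) k * qPochhammer q k * qPochhammer q l = qPochhammer q (k + l) := by
  induction k generalizing l with
  | zero => simp
  | succ k ih =>
    induction l with
    | zero => simp
    | succ l ihl =>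
      have h₁ := ih (l + 1)
      rw [show k + 1 + l = k + (l + 1) by ring] at ihl
      rw [show k + 1 + (l + 1) = k + (l + 1) + 1 by ring, gaussBinom_succ_succ, qPochhammer_succ,
        qPochhammer_succ q l, qPochhammer_succ q (k + (l + 1))]
      rw [qPochhammer_succ q l] at h₁
      rw [qPochhammer_succ q k] at ihl
      linear_combination (1 - q ^ (k + 1)) * h₁ + q ^ (k + 1) * (1 - q ^ (l + 1)) * ihl

theorem prod_one_add_mul_pow_eq_sum_gaussBinom (y : R) (m : ℕ) :
    ∏ j ∈ range m, (1 + y * q ^ j) =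
      ∑ k ∈ range (m + 1), gaussBinom q m k * q ^ k.choose 2 * y ^ k := by
  induction m generalizing y with
  | zero => simp
  | succ m ih =>
    have choose_succ (k : ℕ) : (k + 1).choose 2 = k + k.choose 2 := by
      rw [Nat.choose_succ_succ, Nat.choose_one_right]
    have hprod : ∏ j ∈ range (m + 1), (1 + y * q ^ j) =
        (1 + y) * ∏ j ∈ range m, (1 + y * q * q ^ j) := by
      rw [prod_range_succ', mul_comm]
      simp [pow_succ, mul_assoc, mul_comm q]
    set c : ℕ → R := fun k => gaussBinom q m k * q ^ (k + 1).choose 2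
    have hc (k : ℕ) : gaussBinom q m k * q ^ k.choose 2 * (y * q) ^ k = c k * y ^ k := by
      simp only [c, choose_succ, mul_pow, pow_add]; ring
    calc ∏ j ∈ range (m + 1), (1 + y * q ^ j)
        = ∑ k ∈ range (m + 1), c k * y ^ k + ∑ k ∈ range (m + 1), c k * y ^ (k + 1) := by
          simp only [hprod, ih, hc, add_mul, one_mul, mul_sum, sum_add_distrib]
          congr 1; exact sum_congr rfl fun k _ => by ring
      _ = ∑ k ∈ range (m + 1), c k * y ^ (k + 1) +
            ∑ k ∈ range (m + 1), q ^ (k + 1) * gaussBinom q m (k + 1) * q ^ (k + 1).choose 2 *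
              y ^ (k + 1) + 1 := by
          have hc' (k : ℕ) :
              c (k + 1) = q ^ (k + 1) * gaussBinom q m (k + 1) * q ^ (k + 1).choose 2 := by
            simp only [c, choose_succ (k + 1), pow_add]; ring
          rw [sum_range_succ' (fun k => c k * y ^ k),
            sum_range_succ (fun k => q ^ (k + 1) * _ * _ * _) m,
            gaussBinom_eq_zero_of_lt q m.lt_succ_self]
          simp only [hc', c, gaussBinom_zero_right, zero_add, Nat.choose_succ_self, pow_zero,
            mul_one, mul_zero, zero_mul, add_zero]
          ring
      _ = ∑ k ∈ range (m + 1 + 1), gaussBinom q (m + 1) k * q ^ k.choose 2 * y ^ k := by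
          rw [sum_range_succ' _ (m + 1)]
          simp [c, gaussBinom_succ_succ, add_mul, sum_add_distrib]

end GaussianBinomial

section FiniteTripleProduct

variable {K : Type*} [Field K] {a x : K}

lemma inv_pow_mul_pow_sq_mul_pow_eq_zpow (ha : a ≠ 0) (hx : x ≠ 0) (k N : ℕ) :
    x⁻¹ ^ N * a ^ (N ^ 2) * ((a ^ 2) ^ k.choose 2 * (x / a ^ (2 * N) * a) ^ k) =
      a ^ (((k : ℤ) - N) ^ 2) * x ^ ((k : ℤ) - N) := by
  have two_mul_choose_two : (2 * k.choose 2 : ℤ) = k * (k - 1) := by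
    induction k with
    | zero => simp
    | succ k ih => rw [Nat.choose_succ_succ, Nat.choose_one_right]; push_cast; linear_combination ih
  have e : ((k : ℤ) - N) ^ 2 = N ^ 2 + 2 * k.choose 2 + k - 2 * N * k := by
    linear_combination -two_mul_choose_two
  rw [e, zpow_sub₀ ha, zpow_add₀ ha, zpow_add₀ ha, zpow_sub₀ hx]
  simp only [← zpow_natCast, mul_zpow, div_eq_mul_inv, inv_zpow]
  norm_cast
  field_simp
  ring

theorem prod_range_one_add_mul_pow_mul_one_add_inv_mul_pow (ha : a ≠ 0) (hx : x ≠ 0) (N : ℕ) :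
    ∏ j ∈ range N, ((1 + x * a ^ (2 * j + 1)) * (1 + x⁻¹ * a ^ (2 * j + 1))) =
      ∑ k ∈ range (2 * N + 1),
        gaussBinom (a ^ 2) (2 * N) k * (a ^ (((k : ℤ) - N) ^ 2) * x ^ ((k : ℤ) - N)) := by
  have h_odd : ∑ j ∈ range N, (2 * j + 1) = N ^ 2 := by
    induction N with
    | zero => rfl
    | succ N ih => rw [sum_range_succ, ih]; ring
  -- With `x = y a^{2N-1}`, both products are halves of `∏_{k<2N} (1 + y (a²)^k)`.
  set y := x / a ^ (2 * N) * a
  have h_upper : ∏ j ∈ range N, (1 + x * a ^ (2 * j + 1)) =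
      ∏ j ∈ range N, (1 + y * (a ^ 2) ^ (N + j)) := by
    refine prod_congr rfl fun j _ => ?_
    simp only [y, ← pow_mul, pow_add]
    field_simp
  have h_lower : ∏ j ∈ range N, (1 + x⁻¹ * a ^ (2 * j + 1)) =
      x⁻¹ ^ N * a ^ (N ^ 2) * ∏ j ∈ range N, (1 + y * (a ^ 2) ^ j) := by
    have h_const : x⁻¹ ^ N = ∏ _j ∈ range N, x⁻¹ := by simp
    rw [← prod_range_reflect (fun j => 1 + y * (a ^ 2) ^ j), ← h_odd, ← prod_pow_eq_pow_sum,
      h_const, ← prod_mul_distrib, ← prod_mul_distrib]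
    refine prod_congr rfl fun j hj => ?_
    obtain ⟨i, rfl⟩ : ∃ i, N = j + 1 + i := ⟨N - j - 1, by simp only [mem_range] at hj; omega⟩
    rw [show j + 1 + i - 1 - j = i by omega]
    simp only [y, ← pow_mul, mul_add, pow_add]
    field_simp
    ring
  rw [prod_mul_distrib, h_upper, h_lower, mul_comm, mul_assoc, ← prod_range_add, ← two_mul,
    prod_one_add_mul_pow_eq_sum_gaussBinom, mul_sum]
  refine sum_congr rfl fun k _ => ?_
  rw [← inv_pow_mul_pow_sq_mul_pow_eq_zpow ha hx]
  ring

end FiniteTripleProduct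

open Filter Topology

section Limits

variable {K : Type*} [NormedField K] {q : K}

lemma summable_norm_pow_succ (hq : ‖q‖ < 1) : Summable fun j : ℕ => ‖q ^ (j + 1)‖ :=
  (summable_norm_geometric_of_norm_lt_one hq).comp_injective (add_left_injective 1)

lemma norm_pow_lt_one (hq : ‖q‖ < 1) {n : ℕ} (hn : n ≠ 0) : ‖q ^ n‖ < 1 := by
  rw [norm_pow]
  exact pow_lt_one₀ (norm_nonneg q) hq hn

lemma one_sub_pow_succ_ne_zero (hq : ‖q‖ < 1) (j : ℕ) : 1 - q ^ (j + 1) ≠ 0 := by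
  refine sub_ne_zero.mpr fun h => ?_
  simpa [← h] using norm_pow_lt_one hq j.succ_ne_zero

lemma qPochhammer_ne_zero (hq : ‖q‖ < 1) (k : ℕ) : qPochhammer q k ≠ 0 :=
  prod_ne_zero_iff.mpr fun j _ => one_sub_pow_succ_ne_zero hq j

lemma gaussBinom_add_eq (hq : ‖q‖ < 1) (k l : ℕ) :
    gaussBinom q (k + l) k = qPochhammer q (k + l) * (qPochhammer q k)⁻¹ * (qPochhammer q l)⁻¹ := by
  rw [eq_mul_inv_iff_mul_eq₀ (qPochhammer_ne_zero hq l),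
    eq_mul_inv_iff_mul_eq₀ (qPochhammer_ne_zero hq k), mul_right_comm,
    gaussBinom_add_mul_qPochhammer]

variable [CompleteSpace K]

lemma multipliable_one_sub_pow_succ (hq : ‖q‖ < 1) : Multipliable fun j : ℕ => 1 - q ^ (j + 1) := by
  simpa only [sub_eq_add_neg] using
    multipliable_one_add_of_summable (by simpa only [norm_neg] using summable_norm_pow_succ hq)

lemma tprod_one_sub_pow_succ_ne_zero (hq : ‖q‖ < 1) : ∏' j : ℕ, (1 - q ^ (j + 1)) ≠ 0 := by
  simpa only [sub_eq_add_neg] using tprod_one_add_ne_zero_of_summable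
    (by simpa only [← sub_eq_add_neg] using one_sub_pow_succ_ne_zero hq)
    (by simpa only [norm_neg] using summable_norm_pow_succ hq)

lemma tendsto_qPochhammer (hq : ‖q‖ < 1) :
    Tendsto (qPochhammer q) atTop (𝓝 (∏' j : ℕ, (1 - q ^ (j + 1)))) :=
  (multipliable_one_sub_pow_succ hq).hasProd.tendsto_prod_nat

lemma exists_norm_gaussBinom_le (hq : ‖q‖ < 1) : ∃ C, ∀ m k, ‖gaussBinom q m k‖ ≤ C := by
  obtain ⟨A, hA⟩ := isBounded_iff_forall_norm_le.mp
    (Metric.isBounded_range_of_tendsto _ (tendsto_qPochhammer hq))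
  obtain ⟨B, hB⟩ := isBounded_iff_forall_norm_le.mp
    (Metric.isBounded_range_of_tendsto _ ((tendsto_qPochhammer hq).inv₀
      (tprod_one_sub_pow_succ_ne_zero hq)))
  have hA₀ : 0 ≤ A := (norm_nonneg _).trans (hA _ ⟨0, rfl⟩)
  have hB₀ : 0 ≤ B := (norm_nonneg _).trans (hB _ ⟨0, rfl⟩)
  refine ⟨A * B * B, fun m k => ?_⟩
  rcases le_or_gt k m with hkm | hmk
  · obtain ⟨l, rfl⟩ := Nat.exists_eq_add_of_le hkm
    rw [gaussBinom_add_eq hq, norm_mul, norm_mul]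
    gcongr
    · exact hA _ ⟨_, rfl⟩
    · exact hB _ ⟨k, rfl⟩
    · exact hB _ ⟨l, rfl⟩
  · rw [gaussBinom_eq_zero_of_lt q hmk, norm_zero]
    positivity

lemma tendsto_gaussBinom (hq : ‖q‖ < 1) {ι : Type*} {l : Filter ι} {m n : ι → ℕ}
    (hm : Tendsto m l atTop) (hn : Tendsto n l atTop) :
    Tendsto (fun i => gaussBinom q (m i + n i) (m i)) l (𝓝 (∏' j : ℕ, (1 - q ^ (j + 1)))⁻¹) := by
  have hP := tendsto_qPochhammer hq
  have hP' := hP.inv₀ (tprod_one_sub_pow_succ_ne_zero hq)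
  have := ((hP.comp (hm.atTop_add_atTop hn)).mul (hP'.comp hm)).mul (hP'.comp hn)
  rw [mul_inv_cancel₀ (tprod_one_sub_pow_succ_ne_zero hq), one_mul] at this
  simpa only [Function.comp_def, Pi.inv_apply, gaussBinom_add_eq hq] using this

end Limits

section TripleProduct

variable {K : Type*} [NormedField K] {q a x : K}

/-- `(N + n).toNat` truncates when `n < -N`, hence the `if`; for `n > N` the Gaussian binomial
vanishes by itself. -/
def tripleProductCoeff (q : K) (N : ℕ) (n : ℤ) : K :=
  if -(N : ℤ) ≤ n then gaussBinom q (2 * N) (N + n).toNat else 0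

lemma sum_range_gaussBinom_eq_tsum_tripleProductCoeff (q : K) (N : ℕ) (f : ℤ → K) :
    ∑ k ∈ range (2 * N + 1), gaussBinom q (2 * N) k * f (k - N) =
      ∑' n : ℤ, tripleProductCoeff q N n * f n := by
  have h_inj : Function.Injective fun k : ℕ => (k : ℤ) - N := fun k l h => by simpa using h
  rw [← h_inj.tsum_eq, tsum_eq_sum]
  · refine sum_congr rfl fun k _ => ?_
    simp [tripleProductCoeff]
  · intro k hk
    simp only [mem_range] at hk
    simp [tripleProductCoeff, gaussBinom_eq_zero_of_lt q (show 2 * N < k by omega)]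
  · intro n hn
    simp only [Function.mem_support, tripleProductCoeff] at hn
    split_ifs at hn with h
    · exact ⟨(n + N).toNat, by simp only [Int.ofNat_toNat]; omega⟩
    · simp at hn

variable [CompleteSpace K]

lemma tendsto_tripleProductCoeff (hq : ‖q‖ < 1) (n : ℤ) :
    Tendsto (fun N => tripleProductCoeff q N n) atTop (𝓝 (∏' j : ℕ, (1 - q ^ (j + 1)))⁻¹) := by
  have h_atTop (c : ℤ) : Tendsto (fun N : ℕ => ((N : ℤ) + c).toNat) atTop atTop :=
    tendsto_atTop_atTop.mpr fun b => ⟨b + c.natAbs, fun N hN => by omega⟩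
  refine (tendsto_gaussBinom hq (h_atTop n) (h_atTop (-n))).congr' ?_
  filter_upwards [eventually_ge_atTop n.natAbs] with N hN
  rw [tripleProductCoeff, if_pos (by omega), show 2 * N = ((N : ℤ) + n).toNat + ((N : ℤ) + -n).toNat
    by omega]

lemma exists_norm_tripleProductCoeff_le (hq : ‖q‖ < 1) :
    ∃ C, ∀ N n, ‖tripleProductCoeff q N n‖ ≤ C := by
  obtain ⟨C, hC⟩ := exists_norm_gaussBinom_le hq
  refine ⟨C, fun N n => ?_⟩
  unfold tripleProductCoeff
  split_ifs
  · exact hC _ _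
  · simpa using (norm_nonneg _).trans (hC 0 0)

theorem tendsto_prod_range_one_add_mul_pow_mul_one_add_inv_mul_pow
    (ha : a ≠ 0) (ha₁ : ‖a‖ < 1) (hx : x ≠ 0)
    (hs : Summable fun n : ℤ => ‖a ^ (n ^ 2) * x ^ n‖) :
    Tendsto (fun N => ∏ j ∈ range N, ((1 + x * a ^ (2 * j + 1)) * (1 + x⁻¹ * a ^ (2 * j + 1))))
      atTop (𝓝 ((∏' j : ℕ, (1 - (a ^ 2) ^ (j + 1)))⁻¹ * ∑' n : ℤ, a ^ (n ^ 2) * x ^ n)) := by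
  have hq : ‖a ^ 2‖ < 1 := norm_pow_lt_one ha₁ two_ne_zero
  obtain ⟨C, hC⟩ := exists_norm_tripleProductCoeff_le hq
  simp_rw [prod_range_one_add_mul_pow_mul_one_add_inv_mul_pow ha hx,
    sum_range_gaussBinom_eq_tsum_tripleProductCoeff (a ^ 2) _ fun n => a ^ (n ^ 2) * x ^ n,
    ← tsum_mul_left]
  refine tendsto_tsum_of_dominated_convergence (hs.mul_left C)
    (fun n => (tendsto_tripleProductCoeff hq n).mul_const _) (Eventually.of_forall fun N n => ?_)
  rw [norm_mul]
  exact mul_le_mul_of_nonneg_right (hC N n) (norm_nonneg _)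

lemma multipliable_one_add_mul_pow_two_mul_add_one (ha₁ : ‖a‖ < 1) (c : K) :
    Multipliable fun j : ℕ => 1 + c * a ^ (2 * j + 1) := by
  have hq : ‖a ^ 2‖ < 1 := norm_pow_lt_one ha₁ two_ne_zero
  refine multipliable_one_add_of_summable
    (((summable_norm_geometric_of_norm_lt_one hq).mul_left (‖c * a‖)).congr fun j => ?_)
  simp only [norm_mul, norm_pow, pow_succ, pow_mul]
  ring

theorem tsum_zpow_sq_mul_zpow_eq_tprod (ha : a ≠ 0) (ha₁ : ‖a‖ < 1) (hx : x ≠ 0)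
    (hs : Summable fun n : ℤ => ‖a ^ (n ^ 2) * x ^ n‖) :
    ∑' n : ℤ, a ^ (n ^ 2) * x ^ n =
      ∏' j : ℕ, ((1 - (a ^ 2) ^ (j + 1)) * (1 + x * a ^ (2 * j + 1)) *
        (1 + x⁻¹ * a ^ (2 * j + 1))) := by
  have hq : ‖a ^ 2‖ < 1 := norm_pow_lt_one ha₁ two_ne_zero
  have h_mult := (multipliable_one_add_mul_pow_two_mul_add_one ha₁ x).mul
    (multipliable_one_add_mul_pow_two_mul_add_one ha₁ x⁻¹)
  have h_lim := tendsto_nhds_unique h_mult.hasProd.tendsto_prod_nat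
    (tendsto_prod_range_one_add_mul_pow_mul_one_add_inv_mul_pow ha ha₁ hx hs)
  simp_rw [mul_assoc (1 - (a ^ 2) ^ _)]
  rw [(multipliable_one_sub_pow_succ hq).tprod_mul h_mult, h_lim,
    mul_inv_cancel_left₀ (tprod_one_sub_pow_succ_ne_zero hq)]

end TripleProduct

lemma jq_add_one (τ : ℂ) : jq (τ + 1) = jq τ := by
  rw [jq, mul_add_one, Complex.exp_add, Complex.exp_two_pi_mul_I, mul_one, jq]

lemma exp_two_pi_I_add_one_mul_add_half (τ : ℂ) (j : ℕ) :
    cexp (2 * π * I * (τ + 1) * (j + 1 / 2)) = -cexp (2 * π * I * τ * (j + 1 / 2)) := by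
  rw [show 2 * π * I * (τ + 1) * (j + 1 / 2) = 2 * π * I * τ * (j + 1 / 2) + j * (2 * π * I) + π * I
    by ring, Complex.exp_add, Complex.exp_add, Complex.exp_nat_mul, Complex.exp_two_pi_mul_I,
    one_pow, mul_one, Complex.exp_pi_mul_I, mul_neg_one]

lemma jTheta₃_add_one (v τ : ℂ) : jTheta₃ v (τ + 1) = jTheta₂ v τ := by
  simp only [jTheta₃, jTheta₂, jq_add_one, exp_two_pi_I_add_one_mul_add_half, mul_neg,
    sub_eq_add_neg]

lemma jacobiTheta₂_term_eq_zpow (n : ℤ) (z τ : ℂ) :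
    jacobiTheta₂_term n z τ = cexp (π * I * τ) ^ (n ^ 2) * cexp (2 * π * I * z) ^ n := by
  rw [jacobiTheta₂_term, ← Complex.exp_int_mul, ← Complex.exp_int_mul, ← Complex.exp_add]
  push_cast
  ring_nf

lemma jTheta₃_eq_jacobiTheta₂ (v : ℂ) {τ : ℂ} (hτ : 0 < τ.im) : jTheta₃ v τ = jacobiTheta₂ v τ := by
  set a := cexp (π * I * τ)
  have ha₁ : ‖a‖ < 1 := by
    rw [Complex.norm_exp, Real.exp_lt_one_iff]
    simpa using mul_pos Real.pi_pos hτ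
  have hs : Summable fun n : ℤ => ‖a ^ (n ^ 2) * cexp (2 * π * I * v) ^ n‖ := by
    simpa only [jacobiTheta₂_term_eq_zpow] using
      ((summable_jacobiTheta₂_term_iff v τ).mpr hτ).norm
  have h_sq : jq τ = a ^ 2 := by rw [jq, ← Complex.exp_nat_mul]; ring_nf
  have h_odd (j : ℕ) : cexp (2 * π * I * τ * (j + 1 / 2)) = a ^ (2 * j + 1) := by
    rw [← Complex.exp_nat_mul]; push_cast; ring_nf
  simp only [jacobiTheta₂, jacobiTheta₂_term_eq_zpow, jTheta₃, h_sq, h_odd, Complex.exp_neg]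
  rw [tsum_zpow_sq_mul_zpow_eq_tprod (Complex.exp_ne_zero _) ha₁ (Complex.exp_ne_zero _) hs]

lemma jTheta₃_neg_one_div (v : ℂ) {τ : ℂ} (hτ : 0 < τ.im) :
    jTheta₃ v (-1 / τ) =
      (τ / I) ^ ((1 : ℂ) / 2) * cexp (π * I * τ * v ^ 2) * jTheta₃ (τ * v) τ := by
  have hτ₀ : τ ≠ 0 := by rintro rfl; simp at hτ
  have hτ' : 0 < (-1 / τ).im := by
    rw [neg_div, neg_im, one_div, inv_im, neg_div, neg_neg]
    exact div_pos hτ (normSq_pos.mpr hτ₀)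
  have h_sqrt : (-I * τ) ^ ((1 : ℂ) / 2) ≠ 0 :=
    Complex.cpow_ne_zero_iff.mpr (Or.inl (mul_ne_zero (neg_ne_zero.mpr I_ne_zero) hτ₀))
  have h_fe := jacobiTheta₂_functional_equation (τ * v) τ
  rw [mul_div_cancel_left₀ v hτ₀] at h_fe
  rw [jTheta₃_eq_jacobiTheta₂ v hτ', jTheta₃_eq_jacobiTheta₂ _ hτ, h_fe, div_I,
    show -(τ * I) = -I * τ by ring,
    show -π * I * (τ * v) ^ 2 / τ = -(π * I * τ * v ^ 2) by field_simp, Complex.exp_neg]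
  field_simp

theorem stmt3 (v τ : ℂ) (hτ : 0 < τ.im) :
    jTheta₃ v (τ + 1) = jTheta₂ v τ ∧
    jTheta₃ v (-1 / τ) =
      (τ / Complex.I) ^ ((1 : ℂ) / 2) *
        Complex.exp ((π : ℂ) * Complex.I * τ * v ^ 2) * jTheta₃ (τ * v) τ :=
  ⟨jTheta₃_add_one v τ, jTheta₃_neg_one_div v hτ⟩
end

section
/- The subgroup Γ₀(2) of SL₂(ℤ) is generated by the two elements T = (1 1; 0 1) and S T² S T, where S = (0 −1; 1 0). -/
/-!
With `U = S T² S T = (-1 -1; 2 1)` one has `U² = -1` and `S T² S⁻¹ = -U T⁻¹ = (1 0; -2 1)`, so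
the closure contains every `±T^k` and every lower unipotent matrix `(1 0; 2m 1)`. Left
multiplication by these runs a Euclidean algorithm on the first column `(a, c)` of
`g ∈ Γ₀(2)`: as `a` is odd and `c` even, first replace `a` by `a mod c ∈ (0, |c|)`, still odd,
then `c` by a remainder modulo `2a` of absolute value at most `|a|`, which being even is
strictly smaller than `|a|`. So `|c|` decreases until `c = 0`, where `g = ±T^b`.
-/

open ModularGroup CongruenceSubgroup Matrix.SpecialLinearGroup MatrixGroups

theorem Int.exists_abs_sub_two_mul_mul_lt {a c : ℤ} (ha : Odd a) (hc : Even c) :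
    ∃ m : ℤ, |c - 2 * m * a| < |a| := by
  have ha0 : 2 * a ≠ 0 := by rintro h; simp_all
  obtain ⟨q, r, hr, hlo, hhi⟩ : ∃ q r, c + |a| = r + 2 * (a * q) ∧ 0 ≤ r ∧ r < 2 * |a| := by
    refine ⟨(c + |a|) / (2 * a), _, ?_, Int.emod_nonneg (c + |a|) ha0, ?_⟩
    · rw [← mul_assoc, Int.emod_add_mul_ediv]
    · simpa [abs_mul] using Int.emod_lt_abs (c + |a|) ha0
  -- `c - 2 q a = r - |a|` lies in `[-|a|, |a|)`, and it is even while `|a|` is odd.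
  refine ⟨q, abs_lt.mpr ?_⟩
  rw [mul_right_comm, mul_assoc]
  rw [Int.odd_iff] at ha
  rw [Int.even_iff] at hc
  rcases abs_choice a with h | h <;> rw [h] at hr hhi ⊢ <;> omega

theorem Int.exists_abs_sub_two_mul_mul_add_mul_lt {a c : ℤ} (ha : Odd a) (hc : Even c)
    (hc0 : c ≠ 0) : ∃ k m : ℤ, |c - 2 * m * (a + k * c)| < |c| := by
  have hr : a % c = a + -(a / c) * c := by rw [Int.emod_def]; ring
  have hodd : Odd (a % c) := by
    rw [hr, neg_mul]
    exact ha.sub_even (hc.mul_left _)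
  obtain ⟨m, hm⟩ := Int.exists_abs_sub_two_mul_mul_lt hodd hc
  refine ⟨-(a / c), m, ?_⟩
  rw [← hr]
  calc |c - 2 * m * (a % c)| < |a % c| := hm
    _ = a % c := abs_of_nonneg (Int.emod_nonneg a hc0)
    _ < |c| := Int.emod_lt_abs a hc0

namespace ModularGroup

theorem T_zpow_mul_apply_zero_zero (k : ℤ) (g : SL(2, ℤ)) :
    (T ^ k * g) 0 0 = g 0 0 + k * g 1 0 := by
  simp [coe_T_zpow, Matrix.mul_apply]

theorem S_mul_T_zpow_mul_S_inv_mul_apply_one_zero (n : ℤ) (g : SL(2, ℤ)) :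
    (S * T ^ n * S⁻¹ * g) 1 0 = g 1 0 - n * g 0 0 := by
  simp [S_inv, coe_T_zpow, Matrix.vecMul, dotProduct]
  ring

theorem eq_T_zpow_or_eq_neg_T_zpow_of_apply_one_zero_eq_zero {g : SL(2, ℤ)} (hc : g 1 0 = 0) :
    g = T ^ g 0 1 ∨ g = -T ^ (-g 0 1) := by
  have had : g 0 0 * g 1 1 = 1 := by
    have := g.det_coe ▸ Matrix.det_fin_two g.1
    rw [hc] at this
    linarith
  rcases Int.eq_one_or_neg_one_of_mul_eq_one' had with ⟨ha, hd⟩ | ⟨ha, hd⟩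
  · left; ext i j; fin_cases i <;> fin_cases j <;> simp [ha, hc, hd, coe_T_zpow]
  · right; ext i j; fin_cases i <;> fin_cases j <;> simp [ha, hc, hd, coe_T_zpow]

theorem even_apply_one_zero_of_mem_Gamma0_two {g : SL(2, ℤ)} (hg : g ∈ Gamma0 2) :
    Even (g 1 0) := by
  rwa [Gamma0_mem, ZMod.intCast_eq_zero_iff_even] at hg

theorem odd_apply_zero_zero_of_mem_Gamma0_two {g : SL(2, ℤ)} (hg : g ∈ Gamma0 2) :
    Odd (g 0 0) := by
  have hdet : g 0 0 * g 1 1 = 1 + g 0 1 * g 1 0 := by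
    have := g.det_coe ▸ Matrix.det_fin_two g.1
    linarith
  have hodd := odd_one.add_even ((even_apply_one_zero_of_mem_Gamma0_two hg).mul_left (g 0 1))
  exact (Int.odd_mul.mp (hdet ▸ hodd)).1

local notation "𝓗" => Subgroup.closure ({T, S * T ^ 2 * S * T} : Set SL(2, ℤ))

theorem closure_le_Gamma0_two : 𝓗 ≤ Gamma0 2 := by
  rw [Subgroup.closure_le]
  rintro g (rfl | rfl) <;> rw [SetLike.mem_coe, Gamma0_mem] <;> decide

theorem neg_one_mem_closure : -1 ∈ 𝓗 := by
  rw [show (-1 : SL(2, ℤ)) = (S * T ^ 2 * S * T) ^ 2 by decide]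
  exact pow_mem (Subgroup.subset_closure (by simp)) 2

theorem T_zpow_mem_closure (k : ℤ) : T ^ k ∈ 𝓗 :=
  zpow_mem (Subgroup.subset_closure (by simp)) k

theorem S_mul_T_zpow_two_mul_mul_S_inv_mem_closure (m : ℤ) : S * T ^ (2 * m) * S⁻¹ ∈ 𝓗 := by
  rw [_root_.zpow_mul, ← conj_zpow]
  refine zpow_mem ?_ m
  rw [show S * T ^ (2 : ℤ) * S⁻¹ = -1 * (S * T ^ 2 * S * T * T⁻¹) by rw [S_inv]; simp]
  exact mul_mem neg_one_mem_closure
    (mul_mem (Subgroup.subset_closure (by simp)) (by simpa using T_zpow_mem_closure (-1)))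

theorem mem_closure_of_apply_one_zero_eq_zero {g : SL(2, ℤ)} (hc : g 1 0 = 0) : g ∈ 𝓗 := by
  rcases eq_T_zpow_or_eq_neg_T_zpow_of_apply_one_zero_eq_zero hc with h | h <;> rw [h]
  · exact T_zpow_mem_closure _
  · rw [neg_eq_neg_one_mul]
    exact mul_mem neg_one_mem_closure (T_zpow_mem_closure _)

theorem Gamma0_two_le_closure : Gamma0 2 ≤ 𝓗 := by
  intro g hg
  induction h : (g 1 0).natAbs using Nat.strong_induction_on generalizing g with
  | _ n ih =>
  by_cases hc : g 1 0 = 0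
  · exact mem_closure_of_apply_one_zero_eq_zero hc
  obtain ⟨k, m, hlt⟩ := Int.exists_abs_sub_two_mul_mul_add_mul_lt
    (odd_apply_zero_zero_of_mem_Gamma0_two hg) (even_apply_one_zero_of_mem_Gamma0_two hg) hc
  set u := S * T ^ (2 * m) * S⁻¹ * T ^ k
  have hu : u ∈ 𝓗 :=
    mul_mem (S_mul_T_zpow_two_mul_mul_S_inv_mem_closure m) (T_zpow_mem_closure k)
  have hug : (u * g) 1 0 = g 1 0 - 2 * m * (g 0 0 + k * g 1 0) := by
    rw [mul_assoc, S_mul_T_zpow_mul_S_inv_mul_apply_one_zero, T_zpow_mul_apply_zero_zero,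
      congrFun (T_pow_mul_apply_one k g) 0]
  have hmem : u * g ∈ 𝓗 := by
    refine ih _ ?_ (mul_mem (closure_le_Gamma0_two hu) hg) rfl
    rw [← h, hug]
    zify
    exact hlt
  simpa using mul_mem (inv_mem hu) hmem

end ModularGroup

/-- `Γ₀(2)` is generated by `T = (1 1; 0 1)` and `S T² S T`, where `S = (0 -1; 1 0)`. -/
theorem stmt17 :
    Subgroup.closure {ModularGroup.T, ModularGroup.S * ModularGroup.T ^ 2 *
      ModularGroup.S * ModularGroup.T} = CongruenceSubgroup.Gamma0 2 :=
  le_antisymm closure_le_Gamma0_two Gamma0_two_le_closure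
end

section
/- The subgroup Γ⁰(2) of SL₂(ℤ) is generated by the two elements S T S and T² S T S, where S = (0 −1; 1 0) and T = (1 1; 0 1). -/
open Matrix Matrix.SpecialLinearGroup CongruenceSubgroup

/-- The congruence subgroup `Γ⁰(N)` of matrices whose upper right-hand entry
is congruent to `0` mod `N`. -/
def GammaUpper (N : ℕ) : Subgroup (Matrix.SpecialLinearGroup (Fin 2) ℤ) where
  carrier := { g | ((g.1 0 1 : ℤ) : ZMod N) = 0 }
  one_mem' := by simp
  mul_mem' := by
    intro a b ha hb
    simp only [Set.mem_setOf_eq] at *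
    have h := (Matrix.two_mul_expl a.1 b.1).2.1
    simp only [Matrix.SpecialLinearGroup.coe_mul] at *
    rw [h]
    push_cast
    rw [ha, hb]
    ring
  inv_mem' := by
    intro a ha
    simp only [Set.mem_setOf_eq] at *
    rw [SL2_inv_expl a]
    simp only [Matrix.cons_val_zero, Matrix.cons_val_one, Matrix.head_cons]
    push_cast
    rw [ha]
    ring

namespace Stmt18Aux

open ModularGroup

/-- The lower-triangular generator `L = (1 0; 1 1)`. -/
def Lg : Matrix.SpecialLinearGroup (Fin 2) ℤ :=
  ⟨!![1, 0; 1, 1], by norm_num [Matrix.det_fin_two_of]⟩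

theorem coe_Lg : (Lg : Matrix (Fin 2) (Fin 2) ℤ) = !![1, 0; 1, 1] := rfl

theorem coe_Lg_inv : ((Lg⁻¹ : Matrix.SpecialLinearGroup (Fin 2) ℤ) : Matrix (Fin 2) (Fin 2) ℤ)
    = !![1, 0; -1, 1] := by
  simp [coe_inv, coe_Lg, adjugate_fin_two]

theorem coe_Lg_zpow (n : ℤ) : ((Lg ^ n : Matrix.SpecialLinearGroup (Fin 2) ℤ)
    : Matrix (Fin 2) (Fin 2) ℤ) = !![1, 0; n, 1] := by
  induction' n using Int.induction_on with n h n h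
  · rw [zpow_zero, Matrix.SpecialLinearGroup.coe_one, Matrix.one_fin_two]
  · simp_rw [_root_.zpow_add, zpow_one, coe_mul, h, coe_Lg, Matrix.mul_fin_two]
    congrm !![_, _; ?_, _]
    ring
  · simp_rw [_root_.zpow_sub, zpow_one, coe_mul, h, coe_Lg_inv, Matrix.mul_fin_two]
    congrm !![_, _; ?_, ?_] <;> ring

/-- The subgroup generated by `S T S` and `T² S T S`. -/
def Hgen : Subgroup (Matrix.SpecialLinearGroup (Fin 2) ℤ) :=
  Subgroup.closure {S * T * S, T ^ 2 * S * T * S}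

theorem sts_mem : S * T * S ∈ Hgen :=
  Subgroup.subset_closure (Set.mem_insert _ _)

theorem tsts_mem : T ^ 2 * S * T * S ∈ Hgen :=
  Subgroup.subset_closure (Set.mem_insert_of_mem _ rfl)

theorem coe_sts : ((S * T * S : Matrix.SpecialLinearGroup (Fin 2) ℤ)
    : Matrix (Fin 2) (Fin 2) ℤ) = !![-1, 0; 1, -1] := by
  simp only [coe_mul, coe_S, coe_T, Matrix.mul_fin_two]
  norm_num

theorem coe_tsts : ((T ^ 2 * S * T * S : Matrix.SpecialLinearGroup (Fin 2) ℤ)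
    : Matrix (Fin 2) (Fin 2) ℤ) = !![1, -2; 1, -1] := by
  have h2 : ((2 : ℕ) : ℤ) = (2 : ℤ) := rfl
  simp only [coe_mul, coe_S, coe_T, ← zpow_natCast, coe_T_zpow, Matrix.mul_fin_two]
  norm_num

theorem neg_one_mem : (-1 : Matrix.SpecialLinearGroup (Fin 2) ℤ) ∈ Hgen := by
  have h : (T ^ 2 * S * T * S) * (T ^ 2 * S * T * S) = -1 := by
    apply Subtype.coe_injective
    show (((T ^ 2 * S * T * S) * (T ^ 2 * S * T * S) : Matrix.SpecialLinearGroup (Fin 2) ℤ)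
      : Matrix (Fin 2) (Fin 2) ℤ) = ((-1 : Matrix.SpecialLinearGroup (Fin 2) ℤ)
      : Matrix (Fin 2) (Fin 2) ℤ)
    rw [coe_mul, coe_tsts, Matrix.mul_fin_two, coe_neg,
      Matrix.SpecialLinearGroup.coe_one, Matrix.one_fin_two]
    norm_num
  rw [← h]
  exact Hgen.mul_mem tsts_mem tsts_mem

theorem Tsq_mem : (T ^ 2 : Matrix.SpecialLinearGroup (Fin 2) ℤ) ∈ Hgen := by
  have h : (T ^ 2 : Matrix.SpecialLinearGroup (Fin 2) ℤ)
      = (T ^ 2 * S * T * S) * (S * T * S)⁻¹ := by group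
  rw [h]
  exact Hgen.mul_mem tsts_mem (Hgen.inv_mem sts_mem)

theorem T_even_mem (m : ℤ) : (T ^ (2 * m) : Matrix.SpecialLinearGroup (Fin 2) ℤ) ∈ Hgen := by
  have h : (T ^ (2 * m) : Matrix.SpecialLinearGroup (Fin 2) ℤ) = (T ^ 2) ^ m := by
    rw [_root_.zpow_mul]
    norm_cast
  rw [h]
  exact Hgen.zpow_mem Tsq_mem m

theorem Lg_mem : Lg ∈ Hgen := by
  have h : Lg = (-1) * (S * T * S)⁻¹ := by
    apply Subtype.coe_injective
    have : ((S * T * S)⁻¹ : Matrix.SpecialLinearGroup (Fin 2) ℤ).1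
        = !![-1, 0; -1, -1] := by
      rw [coe_inv, coe_sts, adjugate_fin_two]
      norm_num
    show ((Lg : Matrix.SpecialLinearGroup (Fin 2) ℤ) : Matrix (Fin 2) (Fin 2) ℤ)
      = (((-1) * (S * T * S)⁻¹ : Matrix.SpecialLinearGroup (Fin 2) ℤ)
      : Matrix (Fin 2) (Fin 2) ℤ)
    rw [coe_mul, this, coe_neg, Matrix.SpecialLinearGroup.coe_one, coe_Lg]
    norm_num [Matrix.neg_mul]
  rw [h]
  exact Hgen.mul_mem neg_one_mem (Hgen.inv_mem sts_mem)

theorem Lg_zpow_mem (k : ℤ) : Lg ^ k ∈ Hgen := Hgen.zpow_mem Lg_mem k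

theorem emod_lt_abs (a : ℤ) {b : ℤ} (hb : b ≠ 0) : a % b < |b| := by
  rcases lt_or_gt_of_ne hb with h | h
  · have : a % b = a % (-b) := by rw [Int.emod_neg]
    rw [this, abs_of_neg h]
    exact Int.emod_lt_of_pos a (by omega)
  · rw [abs_of_pos h]
    exact Int.emod_lt_of_pos a h

theorem main : ∀ n : ℕ, ∀ g : Matrix.SpecialLinearGroup (Fin 2) ℤ,
    (g.1 0 1).natAbs ≤ n → (2 : ℤ) ∣ g.1 0 1 → g ∈ Hgen := by
  intro n
  induction n using Nat.strong_induction_on with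
  | _ n IH =>
    intro g hle hdvd
    set a := g.1 0 0 with ha
    set b := g.1 0 1 with hb
    set c := g.1 1 0 with hc
    set d := g.1 1 1 with hd
    have hdet : a * d - b * c = 1 := by
      have := g.2
      rw [Matrix.det_fin_two] at this
      linarith [this]
    by_cases hb0 : b = 0
    · -- base case : g = ± Lg ^ (± c)
      have had : a * d = 1 := by rw [hb0] at hdet; linarith
      rcases (Int.mul_eq_one_iff_eq_one_or_neg_one).mp had with ⟨ha1, hd1⟩ | ⟨ha1, hd1⟩
      · have : g = Lg ^ c := by
          apply Subtype.coe_injective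
          show g.1 = ((Lg ^ c : Matrix.SpecialLinearGroup (Fin 2) ℤ) : Matrix (Fin 2) (Fin 2) ℤ)
          rw [coe_Lg_zpow, Matrix.eta_fin_two g.1, ← ha, ← hb, ← hc, ← hd, ha1, hd1, hb0]
        rw [this]; exact Lg_zpow_mem c
      · have : g = (-1) * Lg ^ (-c) := by
          apply Subtype.coe_injective
          show g.1 = (((-1) * Lg ^ (-c) : Matrix.SpecialLinearGroup (Fin 2) ℤ)
            : Matrix (Fin 2) (Fin 2) ℤ)
          rw [coe_mul, coe_neg, Matrix.SpecialLinearGroup.coe_one, coe_Lg_zpow, Matrix.neg_mul,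
            Matrix.one_mul, Matrix.eta_fin_two g.1, ← ha, ← hb, ← hc, ← hd, ha1, hd1, hb0]
          norm_num
        rw [this]; exact Hgen.mul_mem neg_one_mem (Lg_zpow_mem (-c))
    · -- reduction step
      have haodd : ¬ (2 : ℤ) ∣ a := by
        intro h2a
        have : (2 : ℤ) ∣ 1 := by
          rw [← hdet]
          exact dvd_sub (Dvd.dvd.mul_right h2a d) (Dvd.dvd.mul_right hdvd c)
        norm_num at this
      set k : ℤ := -(a / b) with hk
      set A : ℤ := a % b with hA
      have hAeq : A = a + b * k := by rw [hA, hk, Int.emod_def]; ring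
      have hA0 : 0 ≤ A := Int.emod_nonneg a hb0
      have hAlt : A < (b.natAbs : ℤ) := by
        have := emod_lt_abs a hb0
        rwa [Int.abs_eq_natAbs] at this
      have hAodd : ¬ (2 : ℤ) ∣ A := by
        intro h2A
        apply haodd
        have : a = A - b * k := by linarith [hAeq]
        rw [this]
        exact dvd_sub h2A (Dvd.dvd.mul_right hdvd k)
      have hApos : 0 < A := by
        rcases hA0.lt_or_eq with h | h
        · exact h
        · exact absurd ⟨0, by omega⟩ hAodd
      -- choose m
      set r : ℤ := b % (2 * A) with hr
      have h2A0 : (0:ℤ) < 2 * A := by omega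
      have hr0 : 0 ≤ r := Int.emod_nonneg b (by omega)
      have hrlt : r < 2 * A := Int.emod_lt_of_pos b h2A0
      set q : ℤ := b / (2 * A) with hq
      have hreq : r = b - 2 * A * q := by rw [hr, hq, Int.emod_def]
      have hrA : r ≠ A := by
        intro h
        apply hAodd
        obtain ⟨b1, hb1⟩ := hdvd
        exact ⟨b1 - A * q, by linear_combination hreq - h + hb1⟩
      obtain ⟨m, b', hbeq, hbabs, hbdvd⟩ :
          ∃ (m b' : ℤ), b' = b + 2 * A * m ∧ b'.natAbs < b.natAbs ∧ (2:ℤ) ∣ b' := by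
        obtain ⟨b1, hb1⟩ := hdvd
        rcases lt_or_ge r A with h | h
        · exact ⟨-q, r, by rw [hreq]; ring, by omega,
            ⟨b1 - A * q, by linear_combination hreq + hb1⟩⟩
        · exact ⟨-q - 1, r - 2 * A, by rw [hreq]; ring, by omega,
            ⟨b1 - A * q - A, by linear_combination hreq + hb1⟩⟩
      set g' := g * Lg ^ k * T ^ (2 * m) with hg'
      have hentry : g'.1 0 1 = b' := by
        have h1 := Matrix.two_mul_expl g.1 (Lg ^ k).1
        have h2 := Matrix.two_mul_expl (g * Lg ^ k).1 (T ^ (2 * m)).1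
        rw [hg']
        rw [coe_mul (g * Lg ^ k) (T ^ (2*m))] at *
        rw [h2.2.1]
        rw [coe_T_zpow]
        rw [coe_mul g (Lg ^ k)] at *
        rw [h1.1, h1.2.1, coe_Lg_zpow]
        norm_num [Matrix.cons_val_zero, Matrix.cons_val_one, Matrix.head_cons]
        rw [← ha, ← hb]
        linear_combination (-2*m) * hAeq - hbeq
      have hg'mem : g' ∈ Hgen := by
        apply IH b'.natAbs (by omega) g' (by rw [hentry]) (by rw [hentry]; exact hbdvd)
      have : g = g' * (T ^ (2 * m))⁻¹ * (Lg ^ k)⁻¹ := by rw [hg']; group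
      rw [this]
      exact Hgen.mul_mem (Hgen.mul_mem hg'mem (Hgen.inv_mem (T_even_mem m)))
        (Hgen.inv_mem (Lg_zpow_mem k))

end Stmt18Aux

/-- `Γ⁰(2)` is generated by `S T S` and `T² S T S`, where `S = (0 -1; 1 0)` and
`T = (1 1; 0 1)`. -/
theorem stmt18 :
    Subgroup.closure {ModularGroup.S * ModularGroup.T * ModularGroup.S,
      ModularGroup.T ^ 2 * ModularGroup.S * ModularGroup.T * ModularGroup.S} =
      GammaUpper 2 := by
  apply le_antisymm
  · rw [Subgroup.closure_le]
    rintro x (rfl | rfl)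
    · show ((_ : ℤ) : ZMod 2) = 0
      rw [Stmt18Aux.coe_sts]
      decide
    · show ((_ : ℤ) : ZMod 2) = 0
      rw [Stmt18Aux.coe_tsts]
      decide
  · intro g hg
    have hg' : ((g.1 0 1 : ℤ) : ZMod 2) = 0 := hg
    have hdvd : (2 : ℤ) ∣ g.1 0 1 := by
      rw [ZMod.intCast_zmod_eq_zero_iff_dvd] at hg'
      exact_mod_cast hg'
    exact Stmt18Aux.main (g.1 0 1).natAbs g le_rfl hdvd
end
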